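/- Let G be a finite connected graph with positive vertex populations and k ≥ 1 with I = pop(G)/k an integer. Let T be a spanning tree of G. For each edge e of T, let w(e) be the population of one fixed side of the cut T − e. Then T is completely cuttable (partitionable by edge removals into k components each of population exactly I) if and only if the set {w(e) mod I : e ∈ E(T)} contains 0 with multiplicity exactly k−1, i.e., exactly k−1 edges e satisfy I ∣ w(e), where the side used to compute w(e) is the component of T − e not containing a fixed root r. -/

import Mathlib

open scoped Classical

/-- Total population of a vertex subset. -/
noncomputable def popSet {V : Type*} [Fintype V] (pop : V → ℕ) (s : Set V) : ℕ :=
  ∑ v ∈ Finset.univ, if v ∈ s then pop v else 0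

/-!
Write `L e` for the side of a tree edge `e` away from the root. For `F ⊆ E(T)`, every component
of `T - F` lies on one side of each `e ∈ F`, and the components of `T - F` are that of the root
and, for each `e ∈ F`, the one just below `e`.

If all components have population `I`, then `pop (L e)` is a multiple of `I` for `e ∈ F`, while
for `e ∉ F` the component containing `e` is cut by `e` into a part of population strictly between
`0` and `I` on the far side, and every other component lies on one side of `e`.

Conversely, let `F` be the set of edges with `I ∣ pop (L e)`. By induction on `L e`, the component
just below each `e ∈ F` has population divisible by `I` (it is `L e` minus the components below
other edges of `F`), hence so does the root component. There are `|F| + 1 = k` components whose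
populations are positive multiples of `I` summing to `k I`, so each equals `I`.
-/

open Finset

section popSet

variable {V : Type*} [Fintype V] {pop : V → ℕ} {s t : Set V} {v : V} {I : ℕ}

lemma popSet_eq_sum_filter (pop : V → ℕ) (s : Set V) :
    popSet pop s = ∑ v with v ∈ s, pop v :=
  (sum_filter _ _).symm

lemma popSet_empty (pop : V → ℕ) : popSet pop ∅ = 0 := by
  simp [popSet]

lemma popSet_pos (hpos : ∀ v, 0 < pop v) (hs : s.Nonempty) : 0 < popSet pop s := by
  obtain ⟨v, hv⟩ := hs
  rw [popSet_eq_sum_filter]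
  exact sum_pos (fun v _ => hpos v) ⟨v, by simpa using hv⟩

lemma popSet_lt_popSet (hpos : ∀ v, 0 < pop v) (hst : s ⊆ t) (hv : v ∈ t) (hvs : v ∉ s) :
    popSet pop s < popSet pop t := by
  simp only [popSet_eq_sum_filter]
  exact sum_lt_sum_of_subset (fun u => by simpa using @hst u) (by simpa using hv)
    (by simpa using hvs) (hpos v) fun _ _ _ => Nat.zero_le _

lemma popSet_eq_sum_connectedComponent (H : SimpleGraph V) [Fintype H.ConnectedComponent]
    (pop : V → ℕ) (s : Set V) :
    popSet pop s = ∑ c : H.ConnectedComponent, popSet pop (c.supp ∩ s) := by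
  simp only [popSet_eq_sum_filter]
  rw [← sum_fiberwise _ H.connectedComponentMk]
  refine sum_congr rfl fun c _ => sum_congr ?_ fun _ _ => rfl
  ext v
  simp [and_comm]

lemma dvd_popSet_iff_dvd_popSet_inter {H : SimpleGraph V} [Fintype H.ConnectedComponent]
    (c₀ : H.ConnectedComponent) (h : ∀ c ≠ c₀, I ∣ popSet pop (c.supp ∩ s)) :
    I ∣ popSet pop s ↔ I ∣ popSet pop (c₀.supp ∩ s) := by
  rw [popSet_eq_sum_connectedComponent H, ← add_sum_erase _ _ (mem_univ c₀)]
  exact Nat.dvd_add_left (dvd_sum fun c hc => h c (ne_of_mem_erase hc))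

lemma dvd_popSet_inter_of_dvd (hst : ∀ v ∈ t, v ∈ s → t ⊆ s) (ht : I ∣ popSet pop t) :
    I ∣ popSet pop (t ∩ s) := by
  by_cases h : ∃ v ∈ t, v ∈ s
  · obtain ⟨v, hvt, hvs⟩ := h
    rwa [Set.inter_eq_left.mpr (hst v hvt hvs)]
  · rw [Set.eq_empty_of_forall_notMem (s := t ∩ s) fun v hv => h ⟨v, hv⟩, popSet_empty]
    exact dvd_zero I

end popSet

namespace SimpleGraph

variable {V : Type*} {T H : SimpleGraph V} {r u v x y : V} {e e' : Sym2 V}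

def lowerSide (T : SimpleGraph V) (r : V) (e : Sym2 V) : Set V :=
  {v | ¬ (T.deleteEdges {e}).Reachable v r}

noncomputable def lowerEnd (T : SimpleGraph V) (r : V) (e : Sym2 V) : V :=
  if h : ∃ x ∈ e, x ∈ T.lowerSide r e then h.choose else r

lemma root_notMem_lowerSide (T : SimpleGraph V) (r : V) (e : Sym2 V) : r ∉ T.lowerSide r e :=
  fun h => h .rfl

lemma mem_lowerSide_iff_of_reachable {s : Set (Sym2 V)} (he : e ∈ s)
    (h : (T.deleteEdges s).Reachable u v) : u ∈ T.lowerSide r e ↔ v ∈ T.lowerSide r e := by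
  have h' : (T.deleteEdges {e}).Reachable u v :=
    h.mono (deleteEdges_anti (Set.singleton_subset_iff.mpr he))
  exact not_congr ⟨h'.symm.trans, h'.trans⟩

lemma Walk.mem_edges_of_mem_lowerSide (hle : H ≤ T) (p : H.Walk u v)
    (hu : u ∈ T.lowerSide r e) (hv : v ∉ T.lowerSide r e) : e ∈ p.edges := by
  by_contra he
  rw [← Walk.edges_mapLe_eq_edges hle] at he
  exact hv ((mem_lowerSide_iff_of_reachable (Set.mem_singleton e)
    ⟨(p.mapLe hle).toDeleteEdge e he⟩).mp hu)

lemma Reachable.mem_edgeSet_and_reachable_of_mem_lowerSide (hle : H ≤ T) (h : H.Reachable u v)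
    (hu : u ∈ T.lowerSide r e) (hv : v ∉ T.lowerSide r e) :
    e ∈ H.edgeSet ∧ ∀ z ∈ e, H.Reachable u z := by
  obtain ⟨p⟩ := h
  have he := p.mem_edges_of_mem_lowerSide hle hu hv
  exact ⟨p.edges_subset_edgeSet he,
    fun z hz => ⟨p.takeUntil z (p.mem_support_of_mem_edges he hz)⟩⟩

lemma lowerSide_subset_lowerSide (hx : x ∈ e') (hxe : x ∈ T.lowerSide r e) :
    T.lowerSide r e' ⊆ T.lowerSide r e := by
  intro u hu
  by_contra hue
  have hur : (T.deleteEdges {e}).Reachable u r := not_not.mp hue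
  have hux := (hur.mem_edgeSet_and_reachable_of_mem_lowerSide (deleteEdges_le _) hu
    (T.root_notMem_lowerSide r e')).2 x hx
  exact hxe (hux.symm.trans hur)

lemma Reachable.deleteEdges_reachable_or (h : T.Reachable v x) (y : V) :
    (T.deleteEdges {s(x, y)}).Reachable v x ∨ (T.deleteEdges {s(x, y)}).Reachable v y := by
  obtain ⟨p⟩ := h
  induction p with
  | nil => exact .inl (Reachable.refl _)
  | @cons v w x hvw q ih =>
    by_cases he : s(v, w) = s(x, y)
    · rcases Sym2.eq_iff.mp he with ⟨rfl, -⟩ | ⟨rfl, -⟩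
      exacts [.inl .rfl, .inr .rfl]
    · have hadj : (T.deleteEdges {s(x, y)}).Adj v w := deleteEdges_adj.mpr ⟨hvw, he⟩
      exact ih.imp hadj.reachable.trans hadj.reachable.trans

namespace IsTree

lemma mem_lowerSide_iff_notMem (hT : T.IsTree) (hxy : T.Adj x y) :
    x ∈ T.lowerSide r s(x, y) ↔ y ∉ T.lowerSide r s(x, y) := by
  refine ⟨fun hx hy => ?_, fun hy hx => ?_⟩
  · rcases (hT.1.preconnected r x).deleteEdges_reachable_or y with hrx | hry
    exacts [hx hrx.symm, hy hry.symm]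
  · exact hy fun hyr => isBridge_iff.mp (isAcyclic_iff_forall_adj_isBridge.mp hT.2 hxy)
      (hx.trans hyr.symm)

lemma exists_eq_mk_mem_lowerSide (hT : T.IsTree) (he : e ∈ T.edgeSet) :
    ∃ x y, e = s(x, y) ∧ x ∈ T.lowerSide r e ∧ y ∉ T.lowerSide r e := by
  induction e using Sym2.ind with
  | _ x y =>
    by_cases hx : x ∈ T.lowerSide r s(x, y)
    · exact ⟨x, y, rfl, hx, (hT.mem_lowerSide_iff_notMem he).mp hx⟩
    · exact ⟨y, x, Sym2.eq_swap, not_not.mp (mt (hT.mem_lowerSide_iff_notMem he).mpr hx), hx⟩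

lemma lowerSide_injOn (hT : T.IsTree) : Set.InjOn (T.lowerSide r) T.edgeSet := by
  intro e he e' _ heq
  obtain ⟨x, y, rfl, hx, hy⟩ := hT.exists_eq_mk_mem_lowerSide (r := r) he
  rw [heq] at hx hy
  simpa [eq_comm] using
    (Walk.cons (T.mem_edgeSet.mp he) Walk.nil).mem_edges_of_mem_lowerSide le_rfl hx hy

lemma lowerEnd_mem (hT : T.IsTree) (he : e ∈ T.edgeSet) :
    T.lowerEnd r e ∈ e ∧ T.lowerEnd r e ∈ T.lowerSide r e := by
  obtain ⟨x, y, rfl, hx, -⟩ := hT.exists_eq_mk_mem_lowerSide (r := r) he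
  have h : ∃ z ∈ s(x, y), z ∈ T.lowerSide r s(x, y) := ⟨x, Sym2.mem_mk_left x y, hx⟩
  rw [lowerEnd, dif_pos h]
  exact h.choose_spec

lemma lowerEnd_eq (hT : T.IsTree) (hxy : T.Adj x y) (hy : y ∉ T.lowerSide r s(x, y)) :
    T.lowerEnd r s(x, y) = x := by
  obtain ⟨hmem, hlow⟩ := hT.lowerEnd_mem (r := r) (T.mem_edgeSet.mpr hxy)
  rcases Sym2.mem_iff.mp hmem with h | h
  · exact h
  · rw [h] at hlow
    exact absurd hlow hy

end IsTree

section DeleteEdges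

variable {F : Set (Sym2 V)}

lemma mem_lowerSide_iff_of_mem_supp (he : e ∈ F) {c : (T.deleteEdges F).ConnectedComponent}
    (hu : u ∈ c.supp) (hv : v ∈ c.supp) : u ∈ T.lowerSide r e ↔ v ∈ T.lowerSide r e :=
  mem_lowerSide_iff_of_reachable he (c.reachable_of_mem_supp hu hv)

lemma supp_inter_lowerSide_eq_supp (he : e ∈ F) {c : (T.deleteEdges F).ConnectedComponent}
    (hv : v ∈ c.supp) (hve : v ∈ T.lowerSide r e) : c.supp ∩ T.lowerSide r e = c.supp :=
  Set.inter_eq_left.mpr fun _ hu => (mem_lowerSide_iff_of_mem_supp he hu hv).mpr hve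

lemma supp_inter_lowerSide_eq_empty (he : e ∈ F) {c : (T.deleteEdges F).ConnectedComponent}
    (hv : v ∈ c.supp) (hve : v ∉ T.lowerSide r e) : c.supp ∩ T.lowerSide r e = ∅ :=
  Set.eq_empty_of_forall_notMem fun _ hu => hve ((mem_lowerSide_iff_of_mem_supp he hu.1 hv).mp hu.2)

namespace IsTree

lemma reachable_root_or_lowerEnd (hT : T.IsTree) (v : V) :
    (T.deleteEdges F).Reachable v r ∨
      ∃ e ∈ F, (T.deleteEdges F).Reachable v (T.lowerEnd r e) := by
  obtain ⟨p, hp⟩ := (hT.existsUnique_path v r).exists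
  replace hp := hp.isTrail
  induction p with
  | nil => exact .inl .rfl
  | @cons v u r hvu q ih =>
    obtain ⟨hq, hvuq⟩ := (Walk.isTrail_cons _ _).mp hp
    by_cases he : s(v, u) ∈ F
    · have hu : u ∉ T.lowerSide r s(v, u) := fun hu =>
        hvuq (q.mem_edges_of_mem_lowerSide le_rfl hu (T.root_notMem_lowerSide r _))
      exact .inr ⟨s(v, u), he, by rw [hT.lowerEnd_eq hvu hu]⟩
    · have hadj : (T.deleteEdges F).Reachable v u := (deleteEdges_adj.mpr ⟨hvu, he⟩).reachable
      exact (ih hq).imp hadj.trans fun ⟨e, he, h⟩ => ⟨e, he, hadj.trans h⟩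

lemma not_reachable_lowerEnd_root (hT : T.IsTree) (hF : F ⊆ T.edgeSet) (he : e ∈ F) :
    ¬ (T.deleteEdges F).Reachable (T.lowerEnd r e) r := fun h =>
  T.root_notMem_lowerSide r e ((mem_lowerSide_iff_of_reachable he h).mp (hT.lowerEnd_mem (hF he)).2)

lemma eq_of_reachable_lowerEnd (hT : T.IsTree) (hF : F ⊆ T.edgeSet) (he : e ∈ F)
    (he' : e' ∈ F)
    (h : (T.deleteEdges F).Reachable (T.lowerEnd r e) (T.lowerEnd r e')) : e = e' := by
  obtain ⟨hxe, hxL⟩ := hT.lowerEnd_mem (r := r) (hF he)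
  obtain ⟨hxe', hxL'⟩ := hT.lowerEnd_mem (r := r) (hF he')
  refine hT.lowerSide_injOn (r := r) (hF he) (hF he') (subset_antisymm ?_ ?_)
  · exact lowerSide_subset_lowerSide hxe ((mem_lowerSide_iff_of_reachable he' h).mpr hxL')
  · exact lowerSide_subset_lowerSide hxe' ((mem_lowerSide_iff_of_reachable he h).mp hxL)

lemma card_connectedComponent_deleteEdges [Fintype V] (hT : T.IsTree) {F : Finset (Sym2 V)}
    (hF : ↑F ⊆ T.edgeSet) (r : V) :
    Fintype.card (T.deleteEdges ↑F).ConnectedComponent = #F + 1 := by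
  let label : Option F → (T.deleteEdges ↑F).ConnectedComponent := fun o =>
    (T.deleteEdges ↑F).connectedComponentMk (o.elim r fun e => T.lowerEnd r e)
  have hlabel : label.Bijective := by
    refine ⟨?_, fun c => ?_⟩
    · rintro (_ | ⟨e, he⟩) (_ | ⟨e', he'⟩) h <;> replace h := ConnectedComponent.exact h
      · rfl
      · exact absurd h.symm (hT.not_reachable_lowerEnd_root hF he')
      · exact absurd h (hT.not_reachable_lowerEnd_root hF he)
      · simp [hT.eq_of_reachable_lowerEnd hF he he' h]
    · induction c using ConnectedComponent.ind with | _ v =>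
      rcases hT.reachable_root_or_lowerEnd (r := r) (F := ↑F) v with h | ⟨e, he, h⟩
      exacts [⟨none, ConnectedComponent.sound h.symm⟩,
        ⟨some ⟨e, he⟩, ConnectedComponent.sound h.symm⟩]
  rw [← Fintype.card_of_bijective hlabel, Fintype.card_option, Fintype.card_coe]

variable [Fintype V] {pop : V → ℕ} {I : ℕ}

lemma dvd_popSet_lowerSide_iff (hT : T.IsTree) (hpos : ∀ v, 0 < pop v)
    (hcomp : ∀ c : (T.deleteEdges F).ConnectedComponent, popSet pop c.supp = I)
    (he : e ∈ T.edgeSet) : I ∣ popSet pop (T.lowerSide r e) ↔ e ∈ F := by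
  obtain ⟨x, y, rfl, hx, hy⟩ := hT.exists_eq_mk_mem_lowerSide (r := r) he
  set c₀ := (T.deleteEdges F).connectedComponentMk x
  have hsplit : ∀ c : (T.deleteEdges F).ConnectedComponent, ∀ u ∈ c.supp, ∀ v ∈ c.supp,
      u ∈ T.lowerSide r s(x, y) → v ∉ T.lowerSide r s(x, y) →
        s(x, y) ∉ F ∧ c = c₀ := by
    intro c u hu v hv hul hvl
    obtain ⟨hH, hreach⟩ := (c.reachable_of_mem_supp hu hv)
      |>.mem_edgeSet_and_reachable_of_mem_lowerSide (deleteEdges_le F) hul hvl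
    rw [edgeSet_deleteEdges] at hH
    exact ⟨hH.2, hu.symm.trans (ConnectedComponent.sound (hreach x (Sym2.mem_mk_left x y)))⟩
  have hunsplit : ∀ c, s(x, y) ∈ F ∨ c ≠ c₀ →
      ∀ u ∈ c.supp, u ∈ T.lowerSide r s(x, y) → c.supp ⊆ T.lowerSide r s(x, y) :=
    fun c hc u hu hul v hv => by_contra fun hvl =>
      hc.elim (hsplit c u hu v hv hul hvl).1 (· (hsplit c u hu v hv hul hvl).2)
  rw [dvd_popSet_iff_dvd_popSet_inter c₀ fun c hc =>
    dvd_popSet_inter_of_dvd (hunsplit c (.inr hc)) (hcomp c ▸ dvd_refl I)]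
  refine ⟨fun hdvd => by_contra fun hxy => ?_,
    fun hxy => dvd_popSet_inter_of_dvd (hunsplit c₀ (.inl hxy)) (hcomp c₀ ▸ dvd_refl I)⟩
  have hy₀ : y ∈ c₀.supp :=
    c₀.mem_supp_of_adj_mem_supp rfl (deleteEdges_adj.mpr ⟨he, hxy⟩)
  have hlt := popSet_lt_popSet hpos Set.inter_subset_left hy₀ fun h => hy h.2
  rw [hcomp] at hlt
  exact (popSet_pos hpos (s := c₀.supp ∩ _) ⟨x, rfl, hx⟩).ne'
    (Nat.eq_zero_of_dvd_of_lt hdvd hlt)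

lemma dvd_popSet_supp_inter_lowerSide (hT : T.IsTree) (hF : F ⊆ T.edgeSet)
    (hdvd : ∀ e ∈ F, I ∣ popSet pop (T.lowerSide r e)) (he : e ∈ F)
    (c : (T.deleteEdges F).ConnectedComponent) : I ∣ popSet pop (c.supp ∩ T.lowerSide r e) := by
  induction e using (InvImage.wf (T.lowerSide r) wellFounded_lt).induction generalizing c with
  | _ e ih =>
  have hlow : ∀ c ≠ (T.deleteEdges F).connectedComponentMk (T.lowerEnd r e),
      I ∣ popSet pop (c.supp ∩ T.lowerSide r e) := by
    refine ConnectedComponent.ind fun v hc => ?_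
    rcases hT.reachable_root_or_lowerEnd (r := r) (F := F) v with hr | ⟨e', he', hv⟩
    · rw [supp_inter_lowerSide_eq_empty he (ConnectedComponent.sound hr.symm)
        (T.root_notMem_lowerSide r e), popSet_empty]
      exact dvd_zero I
    rw [ConnectedComponent.sound hv] at hc ⊢
    obtain ⟨hxe', hxL'⟩ := hT.lowerEnd_mem (r := r) (hF he')
    by_cases hxL : T.lowerEnd r e' ∈ T.lowerSide r e
    · have hne : e' ≠ e := by rintro rfl; exact hc rfl
      have hlt : T.lowerSide r e' < T.lowerSide r e :=
        (lowerSide_subset_lowerSide hxe' hxL).lt_of_ne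
          fun h => hne (hT.lowerSide_injOn (hF he') (hF he) h)
      have := ih e' hlt he' ((T.deleteEdges F).connectedComponentMk (T.lowerEnd r e'))
      rwa [supp_inter_lowerSide_eq_supp he' rfl hxL', ← supp_inter_lowerSide_eq_supp he rfl hxL]
        at this
    · rw [supp_inter_lowerSide_eq_empty he rfl hxL, popSet_empty]
      exact dvd_zero I
  by_cases hc : c = (T.deleteEdges F).connectedComponentMk (T.lowerEnd r e)
  · exact hc ▸ (dvd_popSet_iff_dvd_popSet_inter _ hlow).mp (hdvd e he)
  · exact hlow c hc

lemma dvd_popSet_supp (hT : T.IsTree) (hF : F ⊆ T.edgeSet)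
    (hdvd : ∀ e ∈ F, I ∣ popSet pop (T.lowerSide r e)) (htot : I ∣ popSet pop Set.univ)
    (c : (T.deleteEdges F).ConnectedComponent) : I ∣ popSet pop c.supp := by
  have hlower : ∀ c ≠ (T.deleteEdges F).connectedComponentMk r,
      I ∣ popSet pop (c.supp ∩ Set.univ) := by
    refine ConnectedComponent.ind fun v hc => ?_
    obtain ⟨e, he, hv⟩ := (hT.reachable_root_or_lowerEnd v).resolve_left
      fun h => hc (ConnectedComponent.sound h)
    rw [ConnectedComponent.sound hv, Set.inter_univ,
      ← supp_inter_lowerSide_eq_supp he rfl (hT.lowerEnd_mem (hF he)).2]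
    exact hT.dvd_popSet_supp_inter_lowerSide hF hdvd he _
  by_cases hc : c = (T.deleteEdges F).connectedComponentMk r
  · simpa [hc] using (dvd_popSet_iff_dvd_popSet_inter _ hlower).mp htot
  · simpa using hlower c hc

lemma popSet_supp_eq_of_dvd_popSet_lowerSide {F : Finset (Sym2 V)} {k : ℕ} (hT : T.IsTree)
    (hpos : ∀ v, 0 < pop v) (hF : ↑F ⊆ T.edgeSet)
    (hdvd : ∀ e ∈ F, I ∣ popSet pop (T.lowerSide r e)) (hcard : #F = k - 1) (hk : 1 ≤ k)
    (hI : popSet pop Set.univ = k * I) (c : (T.deleteEdges ↑F).ConnectedComponent) :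
    popSet pop c.supp = I := by
  have hdvd := hT.dvd_popSet_supp hF hdvd (hI ▸ dvd_mul_left I k)
  have hle : ∀ c : (T.deleteEdges ↑F).ConnectedComponent, I ≤ popSet pop c.supp := fun c =>
    Nat.le_of_dvd (popSet_pos hpos c.nonempty_supp) (hdvd c)
  have hsum : ∑ _c : (T.deleteEdges ↑F).ConnectedComponent, I =
      ∑ c : (T.deleteEdges ↑F).ConnectedComponent, popSet pop c.supp := by
    rw [sum_const, card_univ, hT.card_connectedComponent_deleteEdges hF r, hcard,
      Nat.sub_add_cancel hk, smul_eq_mul, ← hI,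
      popSet_eq_sum_connectedComponent (T.deleteEdges ↑F)]
    simp only [Set.inter_univ]
  exact ((sum_eq_sum_iff_of_le fun c _ => hle c).mp hsum c (mem_univ c)).symm

end IsTree

end DeleteEdges

end SimpleGraph

open SimpleGraph

theorem completelyCuttable_iff_rooted_weights_general {V : Type*} [Fintype V]
    (T : SimpleGraph V) (pop : V → ℕ)
    (hpos : ∀ v, 0 < pop v) (hTree : T.IsTree)
    (k I : ℕ) (hk : 1 ≤ k) (hI : popSet pop Set.univ = k * I)
    (r : V) :
    (∃ F : Finset (Sym2 V), ↑F ⊆ T.edgeSet ∧ F.card = k - 1 ∧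
        ∀ c : (T.deleteEdges ↑F).ConnectedComponent, popSet pop c.supp = I) ↔
      ((Finset.univ : Finset (Sym2 V)).filter (fun e => e ∈ T.edgeSet ∧
          I ∣ popSet pop {v | ¬ (T.deleteEdges {e}).Reachable v r})).card = k - 1 := by
  constructor
  · rintro ⟨F, hFT, hFcard, hF⟩
    convert hFcard
    ext e
    simp only [mem_filter, mem_univ, true_and]
    exact ⟨fun ⟨he, hdvd⟩ => (hTree.dvd_popSet_lowerSide_iff hpos hF he).mp hdvd,
      fun he => ⟨hFT he, (hTree.dvd_popSet_lowerSide_iff hpos hF (hFT he)).mpr he⟩⟩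
  · intro hcard
    refine ⟨_, ?_, hcard, ?_⟩
    · exact fun e he => (mem_filter.mp he).2.1
    · exact hTree.popSet_supp_eq_of_dvd_popSet_lowerSide hpos (fun e he => (mem_filter.mp he).2.1)
        (fun e he => (mem_filter.mp he).2.2) hcard hk hI

/-- Fix a root `r` of a spanning tree `T` of a connected graph `G`. For an edge `e` of
`T`, let `w(e)` be the population of the component of `T - e` not containing `r`. Then
`T` is completely cuttable (partitionable by removing `k-1` edges into `k` components
each of population exactly `I`) iff exactly `k-1` edges `e` of `T` satisfy `I ∣ w(e)`. -/
theorem completelyCuttable_iff_rooted_weights {V : Type*} [Fintype V]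
    (G T : SimpleGraph V) (pop : V → ℕ)
    (hpos : ∀ v, 0 < pop v) (hG : G.Connected) (hT : T ≤ G) (hTree : T.IsTree)
    (k I : ℕ) (hk : 1 ≤ k) (hIpos : 0 < I) (hI : popSet pop Set.univ = k * I)
    (r : V) :
    (∃ F : Finset (Sym2 V), ↑F ⊆ T.edgeSet ∧ F.card = k - 1 ∧
        ∀ c : (T.deleteEdges ↑F).ConnectedComponent, popSet pop c.supp = I) ↔
      ((Finset.univ : Finset (Sym2 V)).filter (fun e => e ∈ T.edgeSet ∧
          I ∣ popSet pop {v | ¬ (T.deleteEdges {e}).Reachable v r})).card = k - 1 :=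
  completelyCuttable_iff_rooted_weights_general T pop hpos hTree k I hk hI r
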